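/- arXiv:2104.11632 — 3 statements merged into one kernel-verified Lean document; each statement's English description precedes it below -/
import Mathlib

section
/- Fix a matrix A ∈ ℝ^{m×n}, a vector b ∈ ℝ^m, and parameters λ > 0, ρ > 0. Let M := AᵀA + ρI (which is invertible since ρ > 0), ν := M⁻¹Aᵀb, c := √n·(λ/ρ)·‖2ρM⁻¹ − I‖₂ + ‖ν‖₂, and σ := ‖ρM⁻¹‖₂, where ‖·‖₂ on matrices denotes the spectral (operator 2-) norm. Consider the ADMM iteration x^{k+1} = M⁻¹(Aᵀb + ρ(z^k − w^k)), z^{k+1} = S_{λ/ρ}(x^{k+1} + w^k), w^{k+1} = w^k + x^{k+1} − z^{k+1}, initialized with z⁰ = w⁰ = 0. If σ < 1, then for every k ≥ 1 it holds that ‖x^{k+1} + w^k‖_∞ ≤ σ^k·‖ν‖₂ + ((1 − σ^k)/(1 − σ))·c. -/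
open Matrix

/-- The soft thresholding operator `S_α`, applied componentwise. -/
noncomputable def softT {n : ℕ} (α : ℝ) (x : Fin n → ℝ) : Fin n → ℝ :=
  fun i => max (x i - α) 0 - max (-x i - α) 0

/-- Euclidean (ℓ2) norm of a vector in `ℝⁿ`. -/
noncomputable def l2 {n : ℕ} (x : Fin n → ℝ) : ℝ := Real.sqrt (∑ i, x i ^ 2)

/-- Spectral norm (operator 2-norm) of a square real matrix. -/
noncomputable def specNorm {n : ℕ} (M : Matrix (Fin n) (Fin n) ℝ) : ℝ :=
  ‖Matrix.toEuclideanCLM (𝕜 := ℝ) M‖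

lemma l2_eq {n : ℕ} (x : Fin n → ℝ) :
    l2 x = ‖(WithLp.equiv 2 (Fin n → ℝ)).symm x‖ := by
  rw [EuclideanSpace.norm_eq, l2]
  congr 1
  apply Finset.sum_congr rfl
  intro i _
  rw [Real.norm_eq_abs, sq_abs]
  rfl

lemma l2_nonneg {n : ℕ} (x : Fin n → ℝ) : 0 ≤ l2 x := Real.sqrt_nonneg _

lemma l2_mulVec {n : ℕ} (M : Matrix (Fin n) (Fin n) ℝ) (v : Fin n → ℝ) :
    l2 (M *ᵥ v) ≤ specNorm M * l2 v := by
  rw [l2_eq, l2_eq]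
  exact (Matrix.toEuclideanCLM (𝕜 := ℝ) M).le_opNorm ((WithLp.equiv 2 (Fin n → ℝ)).symm v)

lemma sup_le_l2 {n : ℕ} (x : Fin n → ℝ) : ‖x‖ ≤ l2 x := by
  apply pi_norm_le_iff_of_nonneg (l2_nonneg x) |>.2
  intro i
  rw [Real.norm_eq_abs, ← Real.sqrt_sq_eq_abs]
  apply Real.sqrt_le_sqrt
  exact Finset.single_le_sum (f := fun j => x j ^ 2) (fun j _ => sq_nonneg _) (Finset.mem_univ i)

lemma l2_le_of_forall {n : ℕ} (x : Fin n → ℝ) (α : ℝ) (hα : 0 ≤ α)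
    (h : ∀ i, |x i| ≤ α) : l2 x ≤ Real.sqrt n * α := by
  rw [← Real.sqrt_sq hα, ← Real.sqrt_mul (by positivity)]
  apply Real.sqrt_le_sqrt
  calc ∑ i, x i ^ 2 ≤ ∑ _i : Fin n, α ^ 2 := by
        apply Finset.sum_le_sum
        intro i _
        rw [← sq_abs]
        exact pow_le_pow_left₀ (abs_nonneg _) (h i) 2
    _ = n * α ^ 2 := by simp [Finset.sum_const, mul_comm]

lemma soft_diff_bound (α v : ℝ) (hα : 0 ≤ α) :
    |v - (max (v - α) 0 - max (-v - α) 0)| ≤ α := by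
  rcases le_total (v - α) 0 with h1 | h1 <;> rcases le_total (-v - α) 0 with h2 | h2 <;>
    simp [max_eq_left, max_eq_right, h1, h2, abs_le] <;> first
    | (constructor <;> linarith)
    | linarith

/-- The `σ < 1` case of Lemma 1: the ADMM iterates for the Lasso problem satisfy
`‖x^{k+1} + w^k‖_∞ ≤ σ^k ‖ν‖₂ + ((1 - σ^k)/(1 - σ)) c`.  Here `‖·‖` on `Fin n → ℝ`
is the sup norm. -/
theorem admm_lasso_bound_contractive {m n : ℕ}
    (A : Matrix (Fin m) (Fin n) ℝ) (b : Fin m → ℝ)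
    (lam ρ : ℝ) (hlam : 0 < lam) (hρ : 0 < ρ)
    (M : Matrix (Fin n) (Fin n) ℝ) (hM : M = Aᵀ * A + ρ • 1)
    (ν : Fin n → ℝ) (hν : ν = M⁻¹ *ᵥ (Aᵀ *ᵥ b))
    (c : ℝ) (hc : c = Real.sqrt n * (lam / ρ) * specNorm ((2 * ρ) • M⁻¹ - 1) + l2 ν)
    (σ : ℝ) (hσdef : σ = specNorm (ρ • M⁻¹))
    (x z w : ℕ → Fin n → ℝ)
    (hz0 : z 0 = 0) (hw0 : w 0 = 0)
    (hx : ∀ k, x (k + 1) = M⁻¹ *ᵥ (Aᵀ *ᵥ b + ρ • (z k - w k)))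
    (hz : ∀ k, z (k + 1) = softT (lam / ρ) (x (k + 1) + w k))
    (hw : ∀ k, w (k + 1) = w k + x (k + 1) - z (k + 1))
    (hσ : σ < 1) :
    ∀ k : ℕ, 1 ≤ k →
      ‖x (k + 1) + w k‖ ≤ σ ^ k * l2 ν + ((1 - σ ^ k) / (1 - σ)) * c := by
  have hσ0 : 0 ≤ σ := hσdef ▸ norm_nonneg _
  have hα : (0:ℝ) ≤ lam / ρ := le_of_lt (div_pos hlam hρ)
  have hc0 : 0 ≤ c := by
    rw [hc]
    have : (0:ℝ) ≤ Real.sqrt n * (lam / ρ) * specNorm ((2 * ρ) • M⁻¹ - 1) := by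
      apply mul_nonneg (mul_nonneg (Real.sqrt_nonneg _) hα) (norm_nonneg _)
    linarith [l2_nonneg ν]
  -- w (k+1) = (x (k+1) + w k) - softT (lam/ρ) (x (k+1) + w k)
  have hwk : ∀ k, w (k + 1) = (x (k + 1) + w k) - softT (lam / ρ) (x (k + 1) + w k) := by
    intro k; rw [hw, hz]; abel
  have hwbound : ∀ k, l2 (w (k + 1)) ≤ Real.sqrt n * (lam / ρ) := by
    intro k
    apply l2_le_of_forall _ _ hα
    intro i
    rw [hwk]
    exact soft_diff_bound _ _ hα
  -- main recurrence identity
  have key : ∀ k, x (k + 2) + w (k + 1)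
      = ν + (ρ • M⁻¹) *ᵥ (x (k + 1) + w k) - ((2 * ρ) • M⁻¹ - 1) *ᵥ w (k + 1) := by
    intro k
    have hz1 : z (k + 1) = (x (k + 1) + w k) - w (k + 1) := by
      rw [hw]; abel
    have : z (k + 1) - w (k + 1) = (x (k + 1) + w k) - (2 : ℝ) • w (k + 1) := by
      rw [hz1]; module
    rw [hx (k + 1), this, Matrix.mulVec_add, ← hν]
    rw [Matrix.mulVec_smul]
    ext i
    simp only [Pi.add_apply, Pi.sub_apply, Pi.smul_apply, smul_eq_mul,
      Matrix.sub_mulVec, Matrix.smul_mulVec, Matrix.one_mulVec,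
      Matrix.mulVec_sub, Matrix.mulVec_smul]
    ring
  -- l2 bound by induction
  have main : ∀ k : ℕ, l2 (x (k + 1) + w k) ≤ σ ^ k * l2 ν + ((1 - σ ^ k) / (1 - σ)) * c := by
    intro k
    induction k with
    | zero =>
      have : x 1 + w 0 = ν := by
        rw [hx 0, hz0, hw0, hν]
        simp
      rw [this]
      simp
    | succ k ih =>
      have step : l2 (x (k + 2) + w (k + 1)) ≤ σ * l2 (x (k + 1) + w k) + c := by
        rw [key k]
        have h1 : l2 (ν + (ρ • M⁻¹) *ᵥ (x (k + 1) + w k) - ((2 * ρ) • M⁻¹ - 1) *ᵥ w (k + 1))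
            ≤ l2 ν + l2 ((ρ • M⁻¹) *ᵥ (x (k + 1) + w k)) + l2 (((2 * ρ) • M⁻¹ - 1) *ᵥ w (k + 1)) := by
          simp only [l2_eq]
          calc _ = ‖(WithLp.equiv 2 (Fin n → ℝ)).symm ν
              + (WithLp.equiv 2 (Fin n → ℝ)).symm ((ρ • M⁻¹) *ᵥ (x (k + 1) + w k))
              - (WithLp.equiv 2 (Fin n → ℝ)).symm (((2 * ρ) • M⁻¹ - 1) *ᵥ w (k + 1))‖ := by
                congr 1
            _ ≤ _ := by
                apply (norm_sub_le _ _).trans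
                gcongr
                exact norm_add_le _ _
        have h2 : l2 ((ρ • M⁻¹) *ᵥ (x (k + 1) + w k)) ≤ σ * l2 (x (k + 1) + w k) := by
          rw [hσdef]; exact l2_mulVec _ _
        have h3 : l2 (((2 * ρ) • M⁻¹ - 1) *ᵥ w (k + 1))
            ≤ specNorm ((2 * ρ) • M⁻¹ - 1) * (Real.sqrt n * (lam / ρ)) := by
          calc _ ≤ specNorm ((2 * ρ) • M⁻¹ - 1) * l2 (w (k + 1)) := l2_mulVec _ _
            _ ≤ _ := by
              apply mul_le_mul_of_nonneg_left (hwbound k) (norm_nonneg _)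
        rw [hc]
        linarith
      have hind : σ * l2 (x (k + 1) + w k) + c
          ≤ σ * (σ ^ k * l2 ν + ((1 - σ ^ k) / (1 - σ)) * c) + c := by
        nlinarith [l2_nonneg (x (k + 1) + w k)]
      apply step.trans (hind.trans _)
      have h1σ : (0:ℝ) < 1 - σ := by linarith
      have : σ * (σ ^ k * l2 ν + ((1 - σ ^ k) / (1 - σ)) * c) + c
          = σ ^ (k + 1) * l2 ν + ((1 - σ ^ (k + 1)) / (1 - σ)) * c := by
        field_simp
        ring
      rw [this]
  intro k _
  exact (sup_le_l2 _).trans (main k)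
end

section
/- Fix A ∈ ℝ^{m×n}, b ∈ ℝ^m, λ > 0, ρ > 0, let M := AᵀA + ρI, ν := M⁻¹Aᵀb, c := √n·(λ/ρ)·‖2ρM⁻¹ − I‖₂ + ‖ν‖₂ and σ := ‖ρM⁻¹‖₂. Consider the ADMM iteration x^{k+1} = M⁻¹(Aᵀb + ρ(z^k − w^k)), z^{k+1} = S_{λ/ρ}(x^{k+1} + w^k), w^{k+1} = w^k + x^{k+1} − z^{k+1}, initialized with z⁰ = w⁰ = 0, and let y^k := x^k + w^{k−1} for k ≥ 1. Then y^1 = ν and for every k ≥ 1, ‖y^{k+1}‖₂ ≤ σ·‖y^k‖₂ + c. -/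
open Matrix

lemma l2_eq_norm {n : ℕ} (v : Fin n → ℝ) :
    l2 v = ‖(WithLp.equiv 2 (Fin n → ℝ)).symm v‖ := by
  rw [l2, EuclideanSpace.norm_eq]
  congr 1
  apply Finset.sum_congr rfl
  intro i _
  rw [Real.norm_eq_abs, sq_abs]
  rfl

lemma l2_mulVec_le {n : ℕ} (B : Matrix (Fin n) (Fin n) ℝ) (v : Fin n → ℝ) :
    l2 (B *ᵥ v) ≤ specNorm B * l2 v := by
  rw [l2_eq_norm, l2_eq_norm, specNorm]
  have h := (Matrix.toEuclideanCLM (𝕜 := ℝ) B).le_opNorm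
    ((WithLp.equiv 2 (Fin n → ℝ)).symm v)
  exact h

lemma softT_sub_abs {α t : ℝ} (hα : 0 ≤ α) :
    |max (t - α) 0 - max (-t - α) 0 - t| ≤ α := by
  rcases le_total (t - α) 0 with h1 | h1 <;>
    rcases le_total (-t - α) 0 with h2 | h2 <;>
    simp [max_eq_left, max_eq_right, h1, h2, abs_le] <;>
    first
      | (constructor <;> linarith)
      | linarith

lemma l2_le_of_abs_le {n : ℕ} {v : Fin n → ℝ} {α : ℝ} (hα : 0 ≤ α)
    (h : ∀ i, |v i| ≤ α) : l2 v ≤ Real.sqrt n * α := by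
  rw [l2]
  have : ∑ i, v i ^ 2 ≤ ∑ _i : Fin n, α ^ 2 := by
    apply Finset.sum_le_sum
    intro i _
    have := h i
    nlinarith [abs_nonneg (v i), sq_abs (v i)]
  calc Real.sqrt (∑ i, v i ^ 2) ≤ Real.sqrt (∑ _i : Fin n, α ^ 2) := Real.sqrt_le_sqrt this
    _ = Real.sqrt (n * α ^ 2) := by rw [Finset.sum_const, Finset.card_fin, nsmul_eq_mul]
    _ = Real.sqrt n * α := by
        rw [Real.sqrt_mul (Nat.cast_nonneg n), Real.sqrt_sq hα]

/-- The one-step contraction estimate from the proof of Lemma 1: with `y^k := x^k + w^{k-1}`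
and initialization `z⁰ = w⁰ = 0`, we have `y¹ = ν` and `‖y^{k+1}‖₂ ≤ σ ‖y^k‖₂ + c`. -/
theorem admm_lasso_one_step_bound {m n : ℕ}
    (A : Matrix (Fin m) (Fin n) ℝ) (b : Fin m → ℝ)
    (lam ρ : ℝ) (hlam : 0 < lam) (hρ : 0 < ρ)
    (M : Matrix (Fin n) (Fin n) ℝ) (hM : M = Aᵀ * A + ρ • 1)
    (ν : Fin n → ℝ) (hν : ν = M⁻¹ *ᵥ (Aᵀ *ᵥ b))
    (c : ℝ) (hc : c = Real.sqrt n * (lam / ρ) * specNorm ((2 * ρ) • M⁻¹ - 1) + l2 ν)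
    (σ : ℝ) (hσdef : σ = specNorm (ρ • M⁻¹))
    (x z w : ℕ → Fin n → ℝ)
    (hz0 : z 0 = 0) (hw0 : w 0 = 0)
    (hx : ∀ k, x (k + 1) = M⁻¹ *ᵥ (Aᵀ *ᵥ b + ρ • (z k - w k)))
    (hz : ∀ k, z (k + 1) = softT (lam / ρ) (x (k + 1) + w k))
    (hw : ∀ k, w (k + 1) = w k + x (k + 1) - z (k + 1))
    (y : ℕ → Fin n → ℝ) (hy : ∀ k : ℕ, 1 ≤ k → y k = x k + w (k - 1)) :
    y 1 = ν ∧ ∀ k : ℕ, 1 ≤ k → l2 (y (k + 1)) ≤ σ * l2 (y k) + c := by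
  constructor
  · rw [hy 1 le_rfl, hx 0, hz0, hw0, hν]
    simp
  · intro k hk
    obtain ⟨j, rfl⟩ : ∃ j, k = j + 1 := ⟨k - 1, (Nat.succ_pred_eq_of_pos hk).symm⟩
    -- w (j+1) = y (j+1) - z (j+1)
    have hwk : w (j + 1) = y (j + 1) - z (j + 1) := by
      rw [hw j, hy (j + 1) hk]
      simp only [Nat.add_sub_cancel]
      abel
    -- z (j+1) = softT (y (j+1))
    have hzk : z (j + 1) = softT (lam / ρ) (y (j + 1)) := by
      rw [hz j, hy (j + 1) hk]
      simp only [Nat.add_sub_cancel]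
    -- key recursion
    have hrec : y (j + 2) = (ρ • M⁻¹) *ᵥ y (j + 1) +
        (((2 * ρ) • M⁻¹ - 1) *ᵥ (z (j + 1) - y (j + 1)) + ν) := by
      rw [hy (j + 2) (by omega)]
      simp only [show j + 2 - 1 = j + 1 from rfl]
      rw [hx (j + 1), hwk, hν]
      rw [mulVec_add, Matrix.sub_mulVec, Matrix.smul_mulVec,
        Matrix.smul_mulVec, mulVec_smul, one_mulVec]
      have : z (j + 1) - (y (j + 1) - z (j + 1)) =
          (2 : ℝ) • z (j + 1) - y (j + 1) := by
        ext i; simp; ring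
      rw [this]
      rw [mulVec_sub, mulVec_smul, mulVec_sub]
      ext i
      simp [smul_sub]
      ring
    -- bound
    have hbound : l2 (z (j + 1) - y (j + 1)) ≤ Real.sqrt n * (lam / ρ) := by
      apply l2_le_of_abs_le (by positivity)
      intro i
      rw [hzk]
      have : (z (j+1) - y (j+1)) i = softT (lam/ρ) (y (j+1)) i - y (j+1) i := by
        rw [hzk]; rfl
      rw [hzk] at this
      rw [this, softT]
      exact softT_sub_abs (by positivity)
    have tri : l2 (y (j + 2)) ≤ l2 ((ρ • M⁻¹) *ᵥ y (j + 1)) +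
        (l2 (((2 * ρ) • M⁻¹ - 1) *ᵥ (z (j + 1) - y (j + 1))) + l2 ν) := by
      rw [hrec]
      repeat rw [l2_eq_norm]
      calc ‖(WithLp.equiv 2 (Fin n → ℝ)).symm _‖ = ‖(WithLp.equiv 2 (Fin n → ℝ)).symm ((ρ • M⁻¹) *ᵥ y (j+1)) + ((WithLp.equiv 2 (Fin n → ℝ)).symm ((((2 * ρ) • M⁻¹ - 1)) *ᵥ (z (j+1) - y (j+1))) + (WithLp.equiv 2 (Fin n → ℝ)).symm ν)‖ := by rfl
        _ ≤ _ := by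
          refine le_trans (norm_add_le _ _) ?_
          gcongr
          exact norm_add_le _ _
    have h1 := l2_mulVec_le (ρ • M⁻¹) (y (j + 1))
    have h2 := l2_mulVec_le ((2 * ρ) • M⁻¹ - 1) (z (j + 1) - y (j + 1))
    have h3 : specNorm ((2 * ρ) • M⁻¹ - 1) * l2 (z (j + 1) - y (j + 1)) ≤
        specNorm ((2 * ρ) • M⁻¹ - 1) * (Real.sqrt n * (lam / ρ)) := by
      apply mul_le_mul_of_nonneg_left hbound (norm_nonneg _)
    rw [hσdef, hc]
    calc l2 (y (j + 2)) ≤ _ := tri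
      _ ≤ specNorm (ρ • M⁻¹) * l2 (y (j + 1)) +
          (specNorm ((2 * ρ) • M⁻¹ - 1) * (Real.sqrt n * (lam / ρ)) + l2 ν) := by
          gcongr
          exact le_trans h2 h3
      _ = specNorm (ρ • M⁻¹) * l2 (y (j + 1)) +
          (Real.sqrt n * (lam / ρ) * specNorm ((2 * ρ) • M⁻¹ - 1) + l2 ν) := by ring
end

section
/- Let n = n₁·n₂ with n₁, n₂ positive integers, let S ∈ ℝ^{n×n} and p ∈ ℝⁿ, with entries indexed by residues modulo n. For i = 0,…,n−1 define the diagonal d_i ∈ ℝⁿ by (d_i)_j := S_{j, (j+i) mod n}, and define the rotation ρ(x, i) ∈ ℝⁿ by ρ(x, i)_j := x_{(j+i) mod n} (so i < 0 rotates to the right). Then S·p = Σ_{j=0}^{n₂−1} ρ( Σ_{k=0}^{n₁−1} ρ(d_{j·n₁+k}, −j·n₁) ⊙ ρ(p, k), j·n₁ ), where ⊙ denotes the componentwise (Hadamard) product of vectors. -/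
open Matrix

lemma bsgs_aux_bij (n n₁ n₂ : ℕ) [NeZero n] (h₁ : 0 < n₁) (h₂ : 0 < n₂)
    (hn : n = n₁ * n₂) :
    Function.Bijective (fun x : Fin n₂ × Fin n₁ =>
      (((x.1 : ℕ) * n₁ + (x.2 : ℕ) : ℕ) : ZMod n)) := by
  rw [Fintype.bijective_iff_injective_and_card]
  constructor
  · rintro ⟨j, k⟩ ⟨j', k'⟩ h
    simp only at h
    have hlt : ∀ (a : Fin n₂) (b : Fin n₁), (a : ℕ) * n₁ + (b : ℕ) < n := by
      intro a b
      calc (a : ℕ) * n₁ + (b : ℕ) < (a : ℕ) * n₁ + n₁ := by omega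
        _ = ((a : ℕ) + 1) * n₁ := by ring
        _ ≤ n₂ * n₁ := Nat.mul_le_mul_right _ (by omega)
        _ = n := by rw [hn, Nat.mul_comm]
    have := congrArg (ZMod.val) h
    rw [ZMod.val_natCast_of_lt (hlt j k), ZMod.val_natCast_of_lt (hlt j' k')] at this
    have hk : (k : ℕ) = (k' : ℕ) := by
      have h2 : ((j : ℕ) * n₁ + (k : ℕ)) % n₁ = ((j' : ℕ) * n₁ + (k' : ℕ)) % n₁ := by
        rw [this]
      rwa [Nat.mul_comm (j : ℕ), Nat.mul_comm (j' : ℕ), Nat.mul_add_mod, Nat.mul_add_mod, Nat.mod_eq_of_lt k.isLt,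
        Nat.mod_eq_of_lt k'.isLt] at h2
    have hj : (j : ℕ) = (j' : ℕ) := by
      have hk' : (k : ℕ) < n₁ := k.isLt
      have hk'' : (k' : ℕ) < n₁ := k'.isLt
      nlinarith [this]
    exact Prod.ext (Fin.ext hj) (Fin.ext hk)
  · simp [hn, Nat.mul_comm]

/-- The baby-step giant-step identity (equation (10) of the paper) for the optimized
encrypted matrix-vector multiplication: with `n = n₁ n₂`,
`S p = Σ_{j<n₂} ρ( Σ_{k<n₁} ρ(d_{j n₁ + k}, -j n₁) ⊙ ρ(p, k), j n₁ )`,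
where `d_i` are the (extended) diagonals of `S` and `ρ` is cyclic rotation.
Indices are residues modulo `n`. -/
theorem bsgs_diagonal_method_matrix_vector (n n₁ n₂ : ℕ) [NeZero n]
    (h₁ : 0 < n₁) (h₂ : 0 < n₂) (hn : n = n₁ * n₂)
    (S : Matrix (ZMod n) (ZMod n) ℝ) (p : ZMod n → ℝ)
    (d : ZMod n → ZMod n → ℝ) (hd : ∀ i j, d i j = S j (j + i))
    (rot : (ZMod n → ℝ) → ZMod n → ZMod n → ℝ)
    (hrot : ∀ x i j, rot x i j = x (j + i)) :
    S *ᵥ p = ∑ j : Fin n₂,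
      rot (∑ k : Fin n₁,
            rot (d ((((j : ℕ) * n₁ + (k : ℕ) : ℕ) : ZMod n)))
                (-(((j : ℕ) * n₁ : ℕ) : ZMod n))
              * rot p (((k : ℕ) : ZMod n)))
        ((((j : ℕ) * n₁ : ℕ) : ZMod n)) := by
  funext m
  simp only [mulVec, dotProduct, Finset.sum_apply, Pi.mul_apply, hrot, hd]
  have hb := (bsgs_aux_bij n n₁ n₂ h₁ h₂ hn)
  have hb' : Function.Bijective (fun x : Fin n₂ × Fin n₁ =>
      m + (((x.1 : ℕ) * n₁ + (x.2 : ℕ) : ℕ) : ZMod n)) :=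
    (Equiv.addLeft m).bijective.comp hb
  rw [← Fintype.sum_bijective _ hb' _ _ (fun x => rfl), Fintype.sum_prod_type]
  apply Finset.sum_congr rfl
  intro j _
  apply Finset.sum_congr rfl
  intro k _
  have h1 : m + (((j : ℕ) * n₁ : ℕ) : ZMod n) + -(((j : ℕ) * n₁ : ℕ) : ZMod n) = m := by
    ring
  have h2 : ((((j : ℕ) * n₁ + (k : ℕ) : ℕ)) : ZMod n)
      = (((j : ℕ) * n₁ : ℕ) : ZMod n) + ((k : ℕ) : ZMod n) := by push_cast; ring
  rw [h1, h2, ← add_assoc]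
end
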